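/- Let n ∈ ℕ with n ≥ 1 and let s be an integer with 1 ≤ s ≤ m_n − 1. Then for every x ∈ I_{n+1}(e_{n−1} + e_n) one has |s·M_n·K_{s·M_n}(x)| ≥ M_n^2/(2π). -/

import Mathlib

/-!
Write `N = s M_n`, `ε = exp (2πi / m_{n-1})` and `δ = exp (2πi / m_n)`. For `x` in
`I_{n+1}(e_{n-1} + e_n)` and `j = a M_n + b M_{n-1} + c` with `a < s`, `b < m_{n-1}`,
`c < M_{n-1}`, only the digits `n - 1` and `n` of `j` see a nonzero coordinate of `x`, so
`ψ_j(x) = δ^a ε^b`. Since `N K_N = ∑_{j<N} (N - 1 - j) ψ_j`, summing the affine weight over `c`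
and then over `b`, where `∑_b ε^b = 0` kills everything but the `b`-linear part, gives
`N K_N(x) = -M_{n-1}^2 (∑_{a<s} δ^a) (∑_{b<m_{n-1}} b ε^b)`.
Finally `(ε - 1) ∑_b b ε^b = m_{n-1}` with `|ε - 1| ≤ 2π / m_{n-1}`, and
`|∑_{a<s} δ^a| = sin (π s / m_n) / sin (π / m_n) ≥ 1` by concavity of `sin` on `[0, π]`.
-/

open Finset
open scoped ENNReal NNReal

noncomputable section

namespace Vilenkin

/-- The generalized powers `M_0 = 1`, `M_{k+1} = m_k M_k`. -/
def M (m : ℕ → ℕ) : ℕ → ℕ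
  | 0 => 1
  | k + 1 => m k * M m k

/-- The `j`-th digit of `n` in the mixed-radix system determined by `m`. -/
def digit (m : ℕ → ℕ) (n j : ℕ) : ℕ := (n / M m j) % m j

/-- The Vilenkin group `G_m`, the complete direct product of the cyclic groups `Z_{m_k}`. -/
abbrev G (m : ℕ → ℕ) : Type := ∀ k : ℕ, ZMod (m k)

instance (n : ℕ) : MeasurableSpace (ZMod n) := ⊤

/-- The generalized Rademacher functions `r_k(x) = exp(2 π i x_k / m_k)`. -/
def rad (m : ℕ → ℕ) (k : ℕ) (x : G m) : ℂ :=
  Complex.exp (2 * Real.pi * Complex.I * ((x k).val : ℂ) / (m k : ℂ))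

/-- The Vilenkin system `ψ_n = ∏_k r_k^{n_k}` (the product is finite). -/
def psi (m : ℕ → ℕ) (n : ℕ) (x : G m) : ℂ :=
  ∏ j ∈ Finset.range (n + 1), rad m j x ^ digit m n j

/-- The Dirichlet kernels `D_n = ∑_{k=0}^{n-1} ψ_k`. -/
def D (m : ℕ → ℕ) (n : ℕ) (x : G m) : ℂ :=
  ∑ k ∈ Finset.range n, psi m k x

/-- The Fejér kernels `K_n = (1/n) ∑_{k=0}^{n-1} D_k`. -/
def K (m : ℕ → ℕ) (n : ℕ) (x : G m) : ℂ :=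
  (n : ℂ)⁻¹ * ∑ k ∈ Finset.range n, D m k x

/-- The cylinder `I_n(x) = {y : y_j = x_j for j < n}`. -/
def cyl (m : ℕ → ℕ) (n : ℕ) (x : G m) : Set (G m) := {y | ∀ j < n, y j = x j}

/-- The element `e_n` with `n`-th coordinate `1` and all other coordinates `0`. -/
def e (m : ℕ → ℕ) (n : ℕ) : G m := fun k => if k = n then 1 else 0

end Vilenkin

open Real

theorem sum_range_sum_range_eq_sum_mul {R : Type*} [CommRing R] (g : ℕ → R) (N : ℕ) :
    ∑ k ∈ range N, ∑ j ∈ range k, g j = ∑ j ∈ range N, ((N : R) - 1 - j) * g j := by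
  induction N with
  | zero => simp
  | succ N ih =>
    rw [sum_range_succ, ih, sum_range_succ _ N, ← sum_add_distrib]
    push_cast
    simp only [add_sub_cancel_right, sub_self, zero_mul, add_zero]
    exact sum_congr rfl fun j _ => by ring

theorem sum_range_mul_eq_sum_sum {M : Type*} [AddCommMonoid M] (f : ℕ → M) (p q : ℕ) :
    ∑ j ∈ range (p * q), f j = ∑ a ∈ range p, ∑ r ∈ range q, f (a * q + r) := by
  induction p with
  | zero => simp
  | succ p ih => rw [add_mul, one_mul, sum_range_add, ih, sum_range_succ]

theorem sub_one_mul_sum_range_mul_pow {R : Type*} [CommRing R] (x : R) (q : ℕ) :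
    (x - 1) * ∑ b ∈ range q, (b : R) * x ^ b = q * x ^ q - ∑ b ∈ range q, x ^ (b + 1) := by
  induction q with
  | zero => simp
  | succ q ih =>
    rw [sum_range_succ, mul_add, ih, sum_range_succ]
    push_cast
    ring

theorem IsPrimitiveRoot.sub_one_mul_sum_range_mul_pow {R : Type*} [CommRing R] [IsDomain R]
    {ζ : R} {p : ℕ} (hζ : IsPrimitiveRoot ζ p) (hp : 1 < p) :
    (ζ - 1) * ∑ b ∈ range p, (b : R) * ζ ^ b = p := by
  have hshift : ∑ b ∈ range p, ζ ^ (b + 1) = 0 := by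
    simp only [pow_succ', ← mul_sum, hζ.geom_sum_eq_zero hp, mul_zero]
  rw [_root_.sub_one_mul_sum_range_mul_pow, hζ.pow_eq_one, hshift, mul_one, sub_zero]

theorem IsPrimitiveRoot.sum_range_mul_sub_mul_pow_div {R : Type*} [CommRing R] [IsDomain R]
    {ζ : R} {p q : ℕ} (hζ : IsPrimitiveRoot ζ p) (hp : 1 < p) (hq : 0 < q) (C : R) :
    ∑ j ∈ range (p * q), (C - j) * ζ ^ (j / q) =
      -(q ^ 2 : R) * ∑ b ∈ range p, (b : R) * ζ ^ b := by
  have hblock : ∀ b, ∑ c ∈ range q, (C - (b * q + c : ℕ)) * ζ ^ ((b * q + c) / q)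
      = (q * C - ∑ c ∈ range q, (c : R)) * ζ ^ b - q ^ 2 * (b * ζ ^ b) := by
    intro b
    have hdiv : ∀ c ∈ range q, (b * q + c) / q = b := fun c hc => by
      rw [add_comm, Nat.add_mul_div_right _ _ hq, Nat.div_eq_of_lt (mem_range.mp hc), zero_add]
    rw [sum_congr rfl fun c hc => by rw [hdiv c hc], ← sum_mul]
    simp only [Nat.cast_add, Nat.cast_mul, sub_add_eq_sub_sub, sum_sub_distrib, sum_const,
      card_range, nsmul_eq_mul]
    ring
  rw [sum_range_mul_eq_sum_sum, sum_congr rfl fun b _ => hblock b, sum_sub_distrib, ← mul_sum,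
    hζ.geom_sum_eq_zero hp, ← mul_sum]
  ring

theorem exp_two_pi_I_div_pow (p k : ℕ) :
    Complex.exp (2 * π * Complex.I / p) ^ k
      = Complex.exp (Complex.I * ((2 * π * k / p : ℝ) : ℂ)) := by
  rw [← Complex.exp_nat_mul]
  congr 1
  push_cast
  ring

theorem norm_exp_two_pi_I_div_pow_sub_one (p k : ℕ) :
    ‖Complex.exp (2 * π * Complex.I / p) ^ k - 1‖ = 2 * |sin (π * k / p)| := by
  rw [exp_two_pi_I_div_pow, Complex.norm_exp_I_mul_ofReal_sub_one, norm_mul, Real.norm_two,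
    Real.norm_eq_abs]
  congr 3
  ring

theorem norm_exp_two_pi_I_div_sub_one_le (p : ℕ) :
    ‖Complex.exp (2 * π * Complex.I / p) - 1‖ ≤ 2 * π / p := by
  have h := Real.norm_exp_I_mul_ofReal_sub_one_le (x := 2 * π * (1 : ℕ) / p)
  rwa [← exp_two_pi_I_div_pow, pow_one, Real.norm_of_nonneg (by positivity), Nat.cast_one,
    mul_one] at h

theorem sin_pi_div_le_sin_pi_mul_div {p s : ℕ} (hs : 1 ≤ s) (hsp : s < p) :
    sin (π / p) ≤ sin (π * s / p) := by
  have hp : (0 : ℝ) < p := by exact_mod_cast (by omega : 0 < p)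
  have hs' : (1 : ℝ) ≤ s := by exact_mod_cast hs
  have hsp' : (s : ℝ) + 1 ≤ p := by exact_mod_cast hsp
  have hle : π / p ≤ π := div_le_self pi_pos.le (by linarith)
  have hmin := strictConcaveOn_sin_Icc.concaveOn.min_le_of_mem_Icc
    (x := π / p) (y := π - π / p) (z := π * s / p)
    ⟨by positivity, hle⟩ ⟨sub_nonneg.mpr hle, by linarith [div_pos pi_pos hp]⟩
    ⟨div_le_div_of_nonneg_right (by nlinarith [pi_pos]) hp.le, by
      rw [le_sub_iff_add_le, ← add_div, div_le_iff₀ hp]; nlinarith [pi_pos]⟩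
  rwa [sin_pi_sub, min_self] at hmin

theorem one_le_norm_geom_sum_exp {p s : ℕ} (hs : 1 ≤ s) (hsp : s < p) :
    1 ≤ ‖∑ a ∈ range s, Complex.exp (2 * π * Complex.I / p) ^ a‖ := by
  set ζ := Complex.exp (2 * π * Complex.I / p)
  have hζ : ζ ≠ 1 := (Complex.isPrimitiveRoot_exp p (by omega)).ne_one (by omega)
  have hnorm : ‖ζ - 1‖ ≤ ‖ζ ^ s - 1‖ := by
    have h1 := norm_exp_two_pi_I_div_pow_sub_one p 1
    rw [pow_one, Nat.cast_one, mul_one] at h1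
    have hsin := sin_pi_div_le_sin_pi_mul_div hs hsp
    have hsin0 : 0 ≤ sin (π / p) := sin_nonneg_of_nonneg_of_le_pi
      (by positivity) (div_le_self pi_pos.le (by exact_mod_cast (by omega : 1 ≤ p)))
    rw [h1, norm_exp_two_pi_I_div_pow_sub_one, abs_of_nonneg hsin0,
      abs_of_nonneg (hsin0.trans hsin)]
    linarith
  rw [← geom_sum_mul, norm_mul] at hnorm
  exact le_of_mul_le_mul_right (by simpa using hnorm) (norm_pos_iff.mpr (sub_ne_zero.mpr hζ))

theorem div_two_pi_le_norm_sum_range_mul_exp_pow {p : ℕ} (hp : 1 < p) :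
    (p : ℝ) ^ 2 / (2 * π) ≤
      ‖∑ b ∈ range p, (b : ℂ) * Complex.exp (2 * π * Complex.I / p) ^ b‖ := by
  have key := congrArg norm
    ((Complex.isPrimitiveRoot_exp p (by omega)).sub_one_mul_sum_range_mul_pow hp)
  rw [norm_mul, Complex.norm_natCast] at key
  have hp' : (0 : ℝ) < p := by exact_mod_cast (by omega : 0 < p)
  rw [div_le_iff₀ (by positivity)]
  calc (p : ℝ) ^ 2 = ‖_‖ * ‖_‖ * p := by rw [key]; ring
    _ ≤ 2 * π / p * ‖_‖ * p := by gcongr; exact norm_exp_two_pi_I_div_sub_one_le p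
    _ = _ := by field_simp

namespace Vilenkin

section

variable {m : ℕ → ℕ}

theorem M_succ (k : ℕ) : M m (k + 1) = m k * M m k := rfl

theorem M_pos (hm : ∀ k, 0 < m k) : ∀ k, 0 < M m k
  | 0 => Nat.one_pos
  | k + 1 => Nat.mul_pos (hm k) (M_pos hm k)

theorem M_mono (hm : ∀ k, 0 < m k) : Monotone (M m) :=
  monotone_nat_of_le_succ fun k => Nat.le_mul_of_pos_left _ (hm k)

theorem lt_M (hm : ∀ k, 2 ≤ m k) : ∀ k, k < M m k
  | 0 => Nat.one_pos
  | k + 1 => by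
    have := lt_M hm k
    rw [M_succ]
    nlinarith [hm k]

theorem digit_eq_zero_of_lt {j i : ℕ} (h : j < M m i) : digit m j i = 0 := by
  rw [digit, Nat.div_eq_of_lt h, Nat.zero_mod]

theorem digit_of_lt_M_succ {r k : ℕ} (hr : r < M m (k + 1)) : digit m r k = r / M m k := by
  rw [M_succ, mul_comm] at hr
  exact Nat.mod_eq_of_lt (Nat.div_lt_of_lt_mul hr)

theorem digit_mul_M_add {a r k : ℕ} (hr : r < M m k) : digit m (a * M m k + r) k = a % m k := by
  rw [digit, add_comm, Nat.add_mul_div_right _ _ (by omega), Nat.div_eq_of_lt hr, zero_add]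

theorem digit_mul_M_succ_add (a r k : ℕ) : digit m (a * M m (k + 1) + r) k = digit m r k := by
  rcases Nat.eq_zero_or_pos (M m k) with h | h
  · simp [digit, h]
  · rw [digit, digit, M_succ, ← mul_assoc, add_comm, Nat.add_mul_div_right _ _ h,
      Nat.add_mul_mod_self_right]

theorem prod_range_rad_pow_digit_of_le (hm : ∀ k, 0 < m k) (x : G m) {j L L' : ℕ}
    (hL : L ≤ L') (hj : j < M m L) :
    ∏ i ∈ range L', rad m i x ^ digit m j i = ∏ i ∈ range L, rad m i x ^ digit m j i := by
  refine (prod_subset (range_subset_range.mpr hL) fun i _ hi => ?_).symm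
  rw [digit_eq_zero_of_lt (hj.trans_le (M_mono hm (by simpa using hi))), pow_zero]

theorem psi_eq_prod_range (hm : ∀ k, 2 ≤ m k) (x : G m) {j L : ℕ} (hj : j < M m L) :
    psi m j x = ∏ i ∈ range L, rad m i x ^ digit m j i := by
  have hm0 : ∀ k, 0 < m k := fun k => by have := hm k; omega
  rcases le_total L (j + 1) with h | h
  · exact prod_range_rad_pow_digit_of_le hm0 x h hj
  · exact (prod_range_rad_pow_digit_of_le hm0 x h ((j.lt_succ_self).trans (lt_M hm _))).symm

theorem rad_of_eq_zero {x : G m} {k : ℕ} (h : x k = 0) : rad m k x = 1 := by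
  simp [rad, h]

theorem rad_of_eq_one {x : G m} {k : ℕ} (hk : 1 < m k) (h : x k = 1) :
    rad m k x = Complex.exp (2 * π * Complex.I / m k) := by
  have : Fact (1 < m k) := ⟨hk⟩
  simp [rad, h, ZMod.val_one]

theorem psi_of_mem_cyl (hm : ∀ k, 2 ≤ m k) {k : ℕ} {x : G m}
    (hx : x ∈ cyl m (k + 2) (e m k + e m (k + 1))) {a r : ℕ} (ha : a < m (k + 1))
    (hr : r < M m (k + 1)) :
    psi m (a * M m (k + 1) + r) x = Complex.exp (2 * π * Complex.I / m (k + 1)) ^ a *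
      Complex.exp (2 * π * Complex.I / m k) ^ (r / M m k) := by
  have hx_apply : ∀ i < k + 2, x i = e m k i + e m (k + 1) i := hx
  have hxk : x k = 1 := by simp [hx_apply k (by omega), e]
  have hxk' : x (k + 1) = 1 := by simp [hx_apply (k + 1) (by omega), e]
  have hj : a * M m (k + 1) + r < M m (k + 2) := by
    rw [M_succ (k + 1)]
    nlinarith
  have hlow : ∏ i ∈ range k, rad m i x ^ digit m (a * M m (k + 1) + r) i = 1 := by
    refine prod_eq_one fun i hi => ?_
    have hik := mem_range.mp hi
    rw [rad_of_eq_zero (by simp [hx_apply i (by omega), e, hik.ne, (hik.trans k.lt_succ_self).ne]),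
      one_pow]
  rw [psi_eq_prod_range hm x hj, prod_range_succ, prod_range_succ, hlow, one_mul,
    rad_of_eq_one (hm k) hxk, rad_of_eq_one (hm (k + 1)) hxk', digit_mul_M_add hr,
    Nat.mod_eq_of_lt ha, digit_mul_M_succ_add, digit_of_lt_M_succ hr, mul_comm]

theorem natCast_mul_K (x : G m) {n : ℕ} (hn : n ≠ 0) :
    (n : ℂ) * K m n x = ∑ j ∈ range n, ((n : ℂ) - 1 - j) * psi m j x := by
  rw [K, ← mul_assoc, mul_inv_cancel₀ (Nat.cast_ne_zero.mpr hn), one_mul]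
  exact sum_range_sum_range_eq_sum_mul _ n

theorem natCast_mul_K_of_mem_cyl (hm : ∀ k, 2 ≤ m k) {k : ℕ} {x : G m}
    (hx : x ∈ cyl m (k + 2) (e m k + e m (k + 1))) {s : ℕ} (hs0 : s ≠ 0)
    (hs : s ≤ m (k + 1)) :
    ((s * M m (k + 1) : ℕ) : ℂ) * K m (s * M m (k + 1)) x =
      (∑ a ∈ range s, Complex.exp (2 * π * Complex.I / m (k + 1)) ^ a) *
        (-(M m k ^ 2 : ℂ) *
          ∑ b ∈ range (m k), (b : ℂ) * Complex.exp (2 * π * Complex.I / m k) ^ b) := by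
  have hM : ∀ i, 0 < M m i := M_pos fun i => by have := hm i; omega
  rw [natCast_mul_K x (Nat.mul_ne_zero hs0 (hM _).ne'), sum_range_mul_eq_sum_sum, sum_mul]
  refine sum_congr rfl fun a ha => ?_
  have hε := Complex.isPrimitiveRoot_exp (m k) (by have := hm k; omega)
  have hblock := hε.sum_range_mul_sub_mul_pow_div (hm k) (hM k)
    (((s * M m (k + 1) : ℕ) : ℂ) - 1 - (a * M m (k + 1) : ℕ))
  rw [← M_succ] at hblock
  rw [← hblock, mul_sum]
  refine sum_congr rfl fun r hr => ?_
  rw [psi_of_mem_cyl hm hx ((mem_range.mp ha).trans_le hs) (mem_range.mp hr)]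
  push_cast
  ring

end

/-- lower bound `|s M_n K_{s M_n}(x)| ≥ M_n^2 / (2π)` on `I_{n+1}(e_{n-1} + e_n)`. -/
theorem statement5 (m : ℕ → ℕ) (hm : ∀ k, 2 ≤ m k) (n : ℕ) (hn : 1 ≤ n)
    (s : ℕ) (hs1 : 1 ≤ s) (hs2 : s ≤ m n - 1)
    (x : G m) (hx : x ∈ cyl m (n + 1) (e m (n - 1) + e m n)) :
    (M m n : ℝ) ^ 2 / (2 * Real.pi) ≤ ‖((s * M m n : ℕ) : ℂ) * K m (s * M m n) x‖ := by
  obtain ⟨k, rfl⟩ : ∃ k, n = k + 1 := ⟨n - 1, by omega⟩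
  rw [Nat.add_sub_cancel] at hx
  have hs : s < m (k + 1) := by have := hm (k + 1); omega
  rw [natCast_mul_K_of_mem_cyl hm hx (by omega) hs.le, norm_mul, norm_mul, norm_neg, norm_pow,
    Complex.norm_natCast, M_succ, Nat.cast_mul]
  have hG := one_le_norm_geom_sum_exp hs1 hs
  have hB := div_two_pi_le_norm_sum_range_mul_exp_pow (hm k)
  calc ((m k : ℝ) * M m k) ^ 2 / (2 * π)
      = 1 * ((M m k : ℝ) ^ 2 * ((m k : ℝ) ^ 2 / (2 * π))) := by ring
    _ ≤ _ := by gcongr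

end Vilenkin

end
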